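/- In the base-case construction for closed A: for an infinite play x̃ of the covering tree T̃ in which player II accepted (played a move of the form ⟨1,b⟩ at round k+2), the projection π(x̃) lies in A. Hence accepted infinite plays project into A. -/
import Mathlib


universe u v

/-- A game tree: a nonempty set of finite sequences closed under initial segments. -/
def IsGameTree {X : Type*} (T : Set (List X)) : Prop :=
  T.Nonempty ∧ ∀ ⦃p q : List X⦄, q ∈ T → p <+: q → p ∈ T

/-- A terminal position: a position with no proper extension in the tree. -/
def IsTerminal {X : Type*} (T : Set (List X)) (p : List X) : Prop :=
  p ∈ T ∧ ∀ a : X, p ++ [a] ∉ T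

/-- A pruned game tree has no terminal positions. -/
def IsPruned {X : Type*} (T : Set (List X)) : Prop :=
  ∀ p ∈ T, ∃ a : X, p ++ [a] ∈ T

/-- The game subtree at a position `p`. -/
def subtreeAt {X : Type*} (T : Set (List X)) (p : List X) : Set (List X) :=
  {q | q ∈ T ∧ (q <+: p ∨ p <+: q)}

/-- The initial segment of length `n` of an infinite sequence. -/
def prefixFn {X : Type*} (x : ℕ → X) (n : ℕ) : List X :=
  List.ofFn fun i : Fin n => x i

/-- The set of infinite branches through a tree. -/
def body {X : Type*} (T : Set (List X)) : Set (ℕ → X) :=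
  {x | ∀ n, prefixFn x n ∈ T}

/-- `Turn pl n` holds when it is player `pl`'s turn to move at a position of length `n`
(`true` is player I, moving at even stages, `false` is player II). -/
def Turn (pl : Bool) (n : ℕ) : Prop := if pl then Even n else Odd n

/-- A position is consistent with a strategy `σ` for player `pl` if all the moves of
player `pl` along it follow `σ`. -/
def PosConsistent {X : Type*} (pl : Bool) (σ : List X → X) (p : List X) : Prop :=
  ∀ (k : ℕ) (h : k < p.length), Turn pl k → p.get ⟨k, h⟩ = σ (p.take k)

/-- An infinite branch is consistent with a strategy `σ` for player `pl` if all the moves of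
player `pl` along it follow `σ`. -/
def BranchConsistent {X : Type*} (pl : Bool) (σ : List X → X) (x : ℕ → X) : Prop :=
  ∀ k : ℕ, Turn pl k → x k = σ (prefixFn x k)

/-- `σ` is a (legal) strategy for player `pl` in `T`: at any nonterminal position of `T`
consistent with `σ` where it is `pl`'s turn, it produces a legal move. -/
def IsStrategy {X : Type*} (T : Set (List X)) (pl : Bool) (σ : List X → X) : Prop :=
  ∀ p ∈ T, ¬ IsTerminal T p → Turn pl p.length → PosConsistent pl σ p →
    p ++ [σ p] ∈ T


/-- The tree topology on infinite sequences: the product topology of the discrete topology. -/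
def treeTopology (X : Type*) : TopologicalSpace (ℕ → X) :=
  @Pi.topologicalSpace ℕ (fun _ => X) (fun _ => ⊥)

/-- `A` is (relatively) open in the branch space `[T]`. -/
def RelOpen {X : Type*} (T : Set (List X)) (A : Set (ℕ → X)) : Prop :=
  ∃ U : Set (ℕ → X), @IsOpen _ (treeTopology X) U ∧ A = U ∩ body T

/-- `A` is (relatively) closed in the branch space `[T]`. -/
def RelClosed {X : Type*} (T : Set (List X)) (A : Set (ℕ → X)) : Prop :=
  ∃ C : Set (ℕ → X), @IsClosed _ (treeTopology X) C ∧ A = C ∩ body T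

/-- `A` is (relatively) clopen in the branch space `[T]`. -/
def RelClopen {X : Type*} (T : Set (List X)) (A : Set (ℕ → X)) : Prop :=
  RelOpen T A ∧ RelClosed T A


section Aux

variable {X : Type*}

lemma prefixFn_length (x : ℕ → X) (n : ℕ) : (prefixFn x n).length = n := by
  simp [prefixFn]

lemma prefixFn_succ (x : ℕ → X) (n : ℕ) :
    prefixFn x (n + 1) = prefixFn x n ++ [x n] := by
  rw [prefixFn, List.ofFn_succ']
  simp [prefixFn, List.concat_eq_append, Fin.castSucc]

lemma prefixFn_prefix (x : ℕ → X) {n m : ℕ} (h : n ≤ m) :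
    prefixFn x n <+: prefixFn x m := by
  induction m with
  | zero => simp at h; simp [h]
  | succ m ih =>
    rcases Nat.lt_or_ge n (m + 1) with h' | h'
    · exact (ih (Nat.lt_succ_iff.mp h')).trans (by rw [prefixFn_succ]; exact ⟨[x m], rfl⟩)
    · have : n = m + 1 := le_antisymm h h'
      subst this; exact List.prefix_refl _

lemma eq_prefixFn_of_prefix {x : ℕ → X} {l : List X} {n : ℕ}
    (h : l <+: prefixFn x n) : l = prefixFn x l.length := by
  have hlen : l.length ≤ n := by
    have := h.length_le; rwa [prefixFn_length] at this
  have h2 : prefixFn x l.length <+: prefixFn x n := prefixFn_prefix x hlen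
  have := List.prefix_of_prefix_length_le h h2 (by rw [prefixFn_length])
  exact this.eq_of_length (by rw [prefixFn_length])

lemma mem_body_subtreeAt {T : Set (List X)} {q : List X} {x : ℕ → X} :
    x ∈ body (subtreeAt T q) ↔ x ∈ body T ∧ prefixFn x q.length = q := by
  constructor
  · intro h
    have h1 : ∀ n, prefixFn x n ∈ T := fun n => (h n).1
    refine ⟨h1, ?_⟩
    rcases (h q.length).2 with hc | hc
    · exact hc.eq_of_length (by rw [prefixFn_length])
    · exact (hc.eq_of_length (by rw [prefixFn_length])).symm
  · rintro ⟨h1, h2⟩ n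
    refine ⟨h1 n, ?_⟩
    rcases le_or_gt n q.length with h' | h'
    · left; rw [← h2]; exact prefixFn_prefix x h'
    · right; rw [← h2]; exact prefixFn_prefix x h'.le

lemma cylinder_of_closed {C : Set (ℕ → X)} (hC : @IsClosed _ (treeTopology X) C)
    {y : ℕ → X} (hy : y ∉ C) :
    ∃ n, ∀ x, prefixFn x n = prefixFn y n → x ∉ C := by
  letI : TopologicalSpace X := ⊥
  have hC' : IsClosed C := hC
  have hop : IsOpen Cᶜ := hC'.isOpen_compl
  rw [isOpen_pi_iff] at hop
  obtain ⟨I, u, hu, hsub⟩ := hop y hy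
  rcases I.bddAbove with ⟨m, hm⟩
  refine ⟨m + 1, fun x hx hxC => ?_⟩
  have hx' : ∀ i < m + 1, x i = y i := by
    intro i hi
    have hxi : (prefixFn x (m+1))[i]'(by rw [prefixFn_length]; exact hi) = x i := by
      simp only [prefixFn, List.getElem_ofFn]
    have hyi : (prefixFn y (m+1))[i]'(by rw [prefixFn_length]; exact hi) = y i := by
      simp only [prefixFn, List.getElem_ofFn]
    rw [← hxi, ← hyi]
    simp only [hx]
  have : x ∈ (I : Set ℕ).pi u := by
    intro i hi
    have : x i = y i := hx' i (Nat.lt_succ_of_le (hm hi))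
    rw [this]; exact (hu i hi).2
  exact (hsub this) hxC

end Aux

/-- in the base-case construction for closed `A`, the projection of an
infinite play in which player II accepted lies in `A`: an infinite branch through
`p ⌢ ⟨a⟩` none of whose initial segments lies in `Z` (the set of minimal nonterminal
positions `q ⊋ p ⌢ ⟨a⟩` with `[T_q] ∩ A = ∅`) belongs to `A`. -/
theorem stmt16 {X : Type*} (T : Set (List X)) (hT : IsGameTree T)
    (A : Set (ℕ → X)) (hA : A ⊆ body T) (hclosed : RelClosed T A)
    (k : ℕ) (p : List X) (hp : p.length = k) (a : X) (hpa : p ++ [a] ∈ T)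
    (Z : Set (List X))
    (hZ : Z = {q : List X | q ∈ T ∧ ¬ IsTerminal T q ∧ (p ++ [a]) <+: q ∧ p ++ [a] ≠ q ∧
      body (subtreeAt T q) ∩ A = ∅ ∧
      (∀ r : List X, (p ++ [a]) <+: r → r <+: q → p ++ [a] ≠ r → r ≠ q →
        (body (subtreeAt T r) ∩ A).Nonempty)})
    (y : ℕ → X) (hy : y ∈ body T) (hext : prefixFn y (k + 1) = p ++ [a])
    (haccept : ∀ n, prefixFn y n ∉ Z) :
    y ∈ A := by
  -- Key claim: for all n ≥ k+2, the subtree at prefixFn y n meets A.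
  have key : ∀ n, k + 2 ≤ n → (body (subtreeAt T (prefixFn y n)) ∩ A).Nonempty := by
    intro n
    induction n using Nat.strong_induction_on with
    | _ n IH =>
      intro hn
      by_contra hempty
      apply haccept n
      rw [hZ]
      have hprefix : (p ++ [a]) <+: prefixFn y n := by
        rw [← hext]; exact prefixFn_prefix y (by omega)
      have hlen_pa : (p ++ [a]).length = k + 1 := by simp [hp]
      refine ⟨hy n, ?_, hprefix, ?_, Set.not_nonempty_iff_eq_empty.mp hempty, ?_⟩
      · rintro ⟨-, ht⟩
        exact ht (y n) (by rw [← prefixFn_succ]; exact hy (n + 1))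
      · intro h
        have := congrArg List.length h
        rw [hlen_pa, prefixFn_length] at this
        omega
      · intro r hr1 hr2 hr3 hr4
        have hreq : r = prefixFn y r.length := eq_prefixFn_of_prefix hr2
        have hge : k + 1 ≤ r.length := by
          have := hr1.length_le; omega
        have hne1 : r.length ≠ k + 1 := by
          intro h
          exact hr3 (hr1.eq_of_length (by omega))
        have hlt : r.length < n := by
          have hle : r.length ≤ n := by
            have := hr2.length_le; rwa [prefixFn_length] at this
          rcases lt_or_eq_of_le hle with h | h
          · exact h
          · exact absurd (hr2.eq_of_length (by rw [prefixFn_length, h])) hr4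
        rw [hreq]
        exact IH r.length hlt (by omega)
  -- Now use closedness of A.
  obtain ⟨C, hC, hCA⟩ := hclosed
  by_contra hyA
  have hyC : y ∉ C := fun h => hyA (hCA ▸ ⟨h, hy⟩)
  obtain ⟨n, hn⟩ := cylinder_of_closed hC hyC
  obtain ⟨x, hxB, hxA⟩ := key (max n (k + 2)) (le_max_right _ _)
  have hxpre : prefixFn x (max n (k + 2)) = prefixFn y (max n (k + 2)) := by
    have := (mem_body_subtreeAt.mp hxB).2
    rwa [prefixFn_length] at this
  have hxC : x ∈ C := (hCA ▸ hxA).1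
  exact hn x (by
    have h1 : prefixFn x n <+: prefixFn x (max n (k+2)) := prefixFn_prefix x (le_max_left _ _)
    rw [hxpre] at h1
    have := eq_prefixFn_of_prefix h1
    rwa [prefixFn_length] at this) hxC
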